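/- arXiv:2308.08888 — 2 statements merged into one kernel-verified Lean document; each statement's English description precedes it below -/
import Mathlib

section
/- Let m, n ≥ 1 and 1 ≤ r ≤ min(m, n). Let Δ ∈ ℝ^{m×n} with rank(Δ) = r, and let V₀ ∈ ℝ^{n×r} be such that rank(Δ V₀) = r. Suppose U₁ ∈ ℝ^{m×r} satisfies U₁ᵀU₁ = I_r and Δ V₀ = U₁ Ŝ for some Ŝ ∈ ℝ^{r×r}, and suppose V₁ ∈ ℝ^{n×r} satisfies V₁ᵀV₁ = I_r and Δᵀ U₁ = V₁ S₁ᵀ for some S₁ ∈ ℝ^{r×r}. Then U₁ S₁ V₁ᵀ = Δ. -/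
open Matrix

/-- Exactness of the two successive QR-type factorizations used in the low-rank update
for the linear subproblems: if `D` has rank `r`, `D V₀` has rank `r`, `U₁` has orthonormal
columns with `D V₀ = U₁ Shat`, and `V₁` has orthonormal columns with `Dᵀ U₁ = V₁ S₁ᵀ`, then
`U₁ S₁ V₁ᵀ = D`. -/
theorem low_rank_two_step_exactness
    (m n r : ℕ) (hm : 1 ≤ m) (hn : 1 ≤ n) (hr : 1 ≤ r) (hrm : r ≤ m) (hrn : r ≤ n)
    (D : Matrix (Fin m) (Fin n) ℝ) (hD : D.rank = r)
    (V₀ : Matrix (Fin n) (Fin r) ℝ) (hDV : (D * V₀).rank = r)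
    (U₁ : Matrix (Fin m) (Fin r) ℝ) (hU₁ : U₁ᵀ * U₁ = 1)
    (Shat : Matrix (Fin r) (Fin r) ℝ) (hQR₁ : D * V₀ = U₁ * Shat)
    (V₁ : Matrix (Fin n) (Fin r) ℝ) (hV₁ : V₁ᵀ * V₁ = 1)
    (S₁ : Matrix (Fin r) (Fin r) ℝ) (hQR₂ : Dᵀ * U₁ = V₁ * S₁ᵀ) :
    U₁ * S₁ * V₁ᵀ = D := by
  -- rank of U₁ is r
  have hU₁r : U₁.rank = r := by
    have h := Matrix.rank_transpose_mul_self U₁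
    rw [hU₁, Matrix.rank_one] at h
    simpa using h.symm
  -- range inclusions
  have h1 : LinearMap.range (D * V₀).mulVecLin ≤ LinearMap.range U₁.mulVecLin := by
    rw [hQR₁, Matrix.mulVecLin_mul]
    exact LinearMap.range_comp_le_range _ _
  have h2 : LinearMap.range (D * V₀).mulVecLin ≤ LinearMap.range D.mulVecLin := by
    rw [Matrix.mulVecLin_mul]
    exact LinearMap.range_comp_le_range _ _
  -- range equalities via finrank
  have e1 : LinearMap.range (D * V₀).mulVecLin = LinearMap.range U₁.mulVecLin :=
    Submodule.eq_of_le_of_finrank_le h1 (by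
      show U₁.rank ≤ (D * V₀).rank
      rw [hU₁r, hDV])
  have e2 : LinearMap.range (D * V₀).mulVecLin = LinearMap.range D.mulVecLin :=
    Submodule.eq_of_le_of_finrank_le h2 (by
      show D.rank ≤ (D * V₀).rank
      rw [hD, hDV])
  have hle : LinearMap.range D.mulVecLin ≤ LinearMap.range U₁.mulVecLin := by
    rw [← e2, e1]
  -- every column of D lies in the range of U₁
  have hcol : ∀ j, ∃ c : Fin r → ℝ, U₁.mulVecLin c = D.mulVecLin (Pi.single j 1) :=
    fun j => hle (LinearMap.mem_range_self _ (Pi.single j 1))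
  choose C hC using hcol
  set M : Matrix (Fin r) (Fin n) ℝ := Matrix.of (fun k j => C j k) with hM
  have hDM : D = U₁ * M := by
    ext i j
    have h := congrFun (hC j) i
    simp only [Matrix.mulVecLin_apply, Matrix.mulVec_single_one, Matrix.col_apply, Matrix.transpose_apply] at h
    rw [Matrix.mul_apply]
    rw [← h]
    simp [Matrix.mulVec, dotProduct, hM]
  have key : U₁ * (U₁ᵀ * D) = D := by
    conv_lhs => rw [hDM, ← Matrix.mul_assoc U₁ᵀ U₁ M, hU₁, Matrix.one_mul]
    exact hDM.symm
  have hS : S₁ * V₁ᵀ = U₁ᵀ * D := by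
    have h := congrArg Matrix.transpose hQR₂
    simpa [Matrix.transpose_mul] using h.symm
  rw [Matrix.mul_assoc, hS, key]
end

section
/- Let m, n ≥ 1 and 1 ≤ r ≤ min(m, n). Let P₀ = U₀ S₀ V₀ᵀ with U₀ ∈ ℝ^{m×r}, S₀ ∈ ℝ^{r×r}, and V₀ ∈ ℝ^{n×r} satisfying V₀ᵀV₀ = I_r, and let ΔP ∈ ℝ^{m×n}. Suppose U₁ ∈ ℝ^{m×r} satisfies U₁ᵀU₁ = I_r and U₀ S₀ + ΔP V₀ = U₁ Ŝ₀ for some Ŝ₀ ∈ ℝ^{r×r}. Define Ŝ₁ = Ŝ₀ − U₁ᵀ ΔP V₀ and L₁ = V₀ Ŝ₁ᵀ + ΔPᵀ U₁, and suppose V₁ ∈ ℝ^{n×r} satisfies V₁ᵀV₁ = I_r and L₁ = V₁ S₁ᵀ for some S₁ ∈ ℝ^{r×r}. Then U₁ S₁ V₁ᵀ = U₁ U₁ᵀ (P₀ + ΔP). In particular, if additionally rank(P₀ + ΔP) ≤ r and rank((P₀ + ΔP) V₀) = r, then U₁ S₁ V₁ᵀ = P₀ + ΔP. -/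
open Matrix

/-- Correctness of one step of the projector-splitting (K–S–L) low-rank integrator with a
constant increment `dP`: the K-step (QR giving `U₁, Shat₀`), the S-step
(`Shat₁ = Shat₀ − U₁ᵀ dP V₀`) and the L-step (QR of `L₁ = V₀ Shat₁ᵀ + dPᵀ U₁` giving `V₁, S₁ᵀ`)
produce `U₁ S₁ V₁ᵀ = U₁ U₁ᵀ (P₀ + dP)`, and reproduce `P₀ + dP` exactly when
`rank(P₀ + dP) ≤ r` and `rank((P₀ + dP) V₀) = r`. -/
theorem projector_splitting_step_correctness
    (m n r : ℕ) (hm : 1 ≤ m) (hn : 1 ≤ n) (hr : 1 ≤ r) (hrm : r ≤ m) (hrn : r ≤ n)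
    (U₀ : Matrix (Fin m) (Fin r) ℝ) (S₀ : Matrix (Fin r) (Fin r) ℝ)
    (V₀ : Matrix (Fin n) (Fin r) ℝ) (hV₀ : V₀ᵀ * V₀ = 1)
    (P₀ : Matrix (Fin m) (Fin n) ℝ) (hP₀ : P₀ = U₀ * S₀ * V₀ᵀ)
    (dP : Matrix (Fin m) (Fin n) ℝ)
    (U₁ : Matrix (Fin m) (Fin r) ℝ) (hU₁ : U₁ᵀ * U₁ = 1)
    (Shat₀ : Matrix (Fin r) (Fin r) ℝ) (hK : U₀ * S₀ + dP * V₀ = U₁ * Shat₀)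
    (Shat₁ : Matrix (Fin r) (Fin r) ℝ) (hS : Shat₁ = Shat₀ - U₁ᵀ * dP * V₀)
    (L₁ : Matrix (Fin n) (Fin r) ℝ) (hL : L₁ = V₀ * Shat₁ᵀ + dPᵀ * U₁)
    (V₁ : Matrix (Fin n) (Fin r) ℝ) (hV₁ : V₁ᵀ * V₁ = 1)
    (S₁ : Matrix (Fin r) (Fin r) ℝ) (hQR : L₁ = V₁ * S₁ᵀ) :
    U₁ * S₁ * V₁ᵀ = U₁ * U₁ᵀ * (P₀ + dP) ∧
      ((P₀ + dP).rank ≤ r → ((P₀ + dP) * V₀).rank = r →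
        U₁ * S₁ * V₁ᵀ = P₀ + dP) := by
  have hSV : S₁ * V₁ᵀ = L₁ᵀ := by
    rw [hQR, transpose_mul, transpose_transpose]
  have hproj : U₁ * U₁ᵀ * (U₀ * S₀ + dP * V₀) = U₀ * S₀ + dP * V₀ := by
    rw [hK, Matrix.mul_assoc, ← Matrix.mul_assoc U₁ᵀ, hU₁, Matrix.one_mul]
  have hUS1 : U₁ * Shat₁ = U₁ * U₁ᵀ * (U₀ * S₀) := by
    rw [hS, Matrix.mul_sub, ← hK, ← hproj, Matrix.mul_add]
    have : U₁ * U₁ᵀ * (dP * V₀) = U₁ * (U₁ᵀ * dP * V₀) := by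
      simp [Matrix.mul_assoc]
    rw [this, add_sub_cancel_right]
  have h1 : U₁ * S₁ * V₁ᵀ = U₁ * U₁ᵀ * (P₀ + dP) := by
    calc U₁ * S₁ * V₁ᵀ = U₁ * L₁ᵀ := by rw [Matrix.mul_assoc, hSV]
      _ = U₁ * Shat₁ * V₀ᵀ + U₁ * (U₁ᵀ * dP) := by
          rw [hL, transpose_add, transpose_mul, transpose_mul, transpose_transpose,
            transpose_transpose, Matrix.mul_add, Matrix.mul_assoc]
      _ = U₁ * U₁ᵀ * (P₀ + dP) := by
          rw [hUS1, hP₀, Matrix.mul_add]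
          simp [Matrix.mul_assoc]
  refine ⟨h1, fun hrk hrkV => ?_⟩
  set A := P₀ + dP with hA
  have hAV : A * V₀ = U₁ * Shat₀ := by
    rw [hA, hP₀, Matrix.add_mul, Matrix.mul_assoc (U₀ * S₀), hV₀, Matrix.mul_one, hK]
  have hle : LinearMap.range (A * V₀).mulVecLin ≤ LinearMap.range A.mulVecLin := by
    rw [Matrix.mulVecLin_mul]
    exact LinearMap.range_comp_le_range _ _
  have hrange : LinearMap.range (A * V₀).mulVecLin = LinearMap.range A.mulVecLin :=
    Submodule.eq_of_le_of_finrank_le hle (by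
      change A.rank ≤ (A * V₀).rank
      rw [hrkV]; exact hrk)
  have hQU : (1 - U₁ * U₁ᵀ) * U₁ = 0 := by
    rw [Matrix.sub_mul, Matrix.one_mul, Matrix.mul_assoc, hU₁, Matrix.mul_one, sub_self]
  have hkill : (1 - U₁ * U₁ᵀ) * (A * V₀) = 0 := by
    rw [hAV, ← Matrix.mul_assoc, hQU, Matrix.zero_mul]
  have hQA : (1 - U₁ * U₁ᵀ) * A = 0 := by
    have hvec : ∀ x, ((1 - U₁ * U₁ᵀ) * A) *ᵥ x = 0 := by
      intro x
      have hmem : A *ᵥ x ∈ LinearMap.range A.mulVecLin := ⟨x, rfl⟩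
      rw [← hrange] at hmem
      obtain ⟨y, hy⟩ := hmem
      rw [← Matrix.mulVec_mulVec, ← hy, Matrix.mulVecLin_apply,
        Matrix.mulVec_mulVec, hkill]
      simp
    ext i j
    have := congrFun (hvec (Pi.single j 1)) i
    simpa [Matrix.mulVec_single] using this
  have hfix : U₁ * U₁ᵀ * A = A := by
    have h := hQA
    rw [Matrix.sub_mul, Matrix.one_mul, sub_eq_zero] at h
    exact h.symm
  rw [h1, hfix]
end
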